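/- Let R_r^0 be the integral operator R_r^0 g(x) = ∫_a^{b−} R_r^0(x,y) g(y) dm(y) with symmetric kernel R_r^0(x,y) = u_r(x∧y) v_r(x∨y), where u_r, v_r are the normalized increasing/decreasing positive solutions of Lf = rf (Wronskian 1). Then for any bounded Borel g, f = R_r^0 g belongs to D(L) and satisfies L f = r f − g on (a,b). -/

import Mathlib

/-!
Splitting the kernel at `x` gives `f = v P + u Q` with `P x = ∫_{t ≤ x} u g dm` and
`Q x = ∫_{t > x} v g dm`, so that `dP = u g dm` and `dQ = -v g dm`. The Lebesgue–Stieltjes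
product rule (Fubini on the triangle `{w ≤ z}`; the diagonal is negligible because the measures
have no atoms) gives `df = (𝒟_s v · P + 𝒟_s u · Q) ds`, the `dm`-terms `v · u g` and
`u · (-v g)` cancelling. Applied once more it gives
`d(𝒟_s v · P + 𝒟_s u · Q) = (r (v P + u Q) + (u 𝒟_s v - v 𝒟_s u) g) dm = (r f - g) dm`
by the Wronskian normalization.
-/

open MeasureTheory Filter Set Topology

section Fubini

variable {ρ ν : Measure ℝ} {φ ψ : ℝ → ℝ}

theorem integrable_mul_integral_Iic [SFinite ν] (hφ : Integrable φ ρ) (hψ : Integrable ψ ν) :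
    Integrable (fun z => φ z * ∫ w in Iic z, ψ w ∂ν) ρ := by
  have hS : MeasurableSet {p : ℝ × ℝ | p.2 ≤ p.1} :=
    measurableSet_le measurable_snd measurable_fst
  convert ((hφ.mul_prod hψ).indicator hS).integral_prod_left using 2 with z
  rw [← integral_const_mul, ← integral_indicator measurableSet_Iic]
  congr 1 with w

theorem integral_mul_integral_Iic_add_integral_Iio_mul [SFinite ρ] [SFinite ν]
    (hφ : Integrable φ ρ) (hψ : Integrable ψ ν) :
    ∫ z, φ z * (∫ w in Iic z, ψ w ∂ν) ∂ρ + ∫ w, (∫ z in Iio w, φ z ∂ρ) * ψ w ∂ν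
      = (∫ z, φ z ∂ρ) * ∫ w, ψ w ∂ν := by
  have hS : MeasurableSet {p : ℝ × ℝ | p.2 ≤ p.1} :=
    measurableSet_le measurable_snd measurable_fst
  have hK := hφ.mul_prod hψ
  rw [← integral_prod_mul, ← integral_add_compl hS hK, ← integral_indicator hS,
    ← integral_indicator hS.compl, integral_prod _ (hK.indicator hS),
    integral_prod_symm _ (hK.indicator hS.compl)]
  congr 1
  · congr 1 with z
    rw [← integral_const_mul, ← integral_indicator measurableSet_Iic]
    congr 1 with w
  · congr 1 with w
    rw [← integral_mul_const, ← integral_indicator measurableSet_Iio]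
    congr 1 with z
    by_cases h : z < w <;> simp [indicator, h, not_le.2]

end Fubini

/-- In the paper's notation, `𝒟_μ F = φ` on `S`. -/
def IsPrimitiveOn (μ : Measure ℝ) (φ F : ℝ → ℝ) (S : Set ℝ) : Prop :=
  ∀ x ∈ S, ∀ y ∈ S, F x - F y = ∫ z in y..x, φ z ∂μ

namespace IsPrimitiveOn

variable {μ : Measure ℝ} {φ F : ℝ → ℝ} {S : Set ℝ} {x y : ℝ}

theorem mono {T : Set ℝ} (h : IsPrimitiveOn μ φ F S) (hT : T ⊆ S) : IsPrimitiveOn μ φ F T :=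
  fun x hx y hy => h x (hT hx) y (hT hy)

theorem sub_eq_setIntegral (h : IsPrimitiveOn μ φ F S) (hx : x ∈ S) (hy : y ∈ S) (hyx : y ≤ x) :
    F x - F y = ∫ z in Ioc y x, φ z ∂μ := by
  rw [h x hx y hy, intervalIntegral.integral_of_le hyx]

theorem of_le (h : ∀ x ∈ S, ∀ y ∈ S, y ≤ x → F x - F y = ∫ z in Ioc y x, φ z ∂μ) :
    IsPrimitiveOn μ φ F S := by
  intro x hx y hy
  rcases le_total y x with hyx | hxy
  · rw [intervalIntegral.integral_of_le hyx, h x hx y hy hyx]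
  · rw [intervalIntegral.integral_symm, intervalIntegral.integral_of_le hxy, ← h y hy x hx hxy]
    ring

theorem congr {φ' F' : ℝ → ℝ} (h : IsPrimitiveOn μ φ F S) (hS : S.OrdConnected)
    (hφ : EqOn φ φ' S) (hF : EqOn F F' S) : IsPrimitiveOn μ φ' F' S := by
  intro x hx y hy
  rw [← hF hx, ← hF hy, h x hx y hy]
  exact intervalIntegral.integral_congr fun t ht => hφ (hS.uIcc_subset hy hx ht)

theorem monotoneOn (h : IsPrimitiveOn μ φ F S) (hS : S.OrdConnected) (hφ : ∀ t ∈ S, 0 ≤ φ t) :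
    MonotoneOn F S := by
  intro y hy x hx hyx
  have hdiff := h.sub_eq_setIntegral hx hy hyx
  have hnonneg : 0 ≤ ∫ z in Ioc y x, φ z ∂μ :=
    setIntegral_nonneg measurableSet_Ioc fun t ht => hφ t (hS.out hy hx (Ioc_subset_Icc_self ht))
  linarith

theorem sub_eq_integral_Iic_restrict (h : IsPrimitiveOn μ φ F (Icc y x)) {t : ℝ}
    (ht : t ∈ Ioc y x) : F t - F y = ∫ z in Iic t, φ z ∂(μ.restrict (Ioc y x)) := by
  rw [Measure.restrict_restrict measurableSet_Iic, Iic_inter_Ioc_of_le ht.2,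
    h.sub_eq_setIntegral (Ioc_subset_Icc_self ht) (left_mem_Icc.2 (ht.1.le.trans ht.2)) ht.1.le]

theorem sub_eq_integral_Iio_restrict (h : IsPrimitiveOn μ φ F (Icc y x)) {t : ℝ}
    (ht : t ∈ Ioc y x) (h0 : μ {t} = 0) :
    F t - F y = ∫ z in Iio t, φ z ∂(μ.restrict (Ioc y x)) := by
  rw [Measure.restrict_restrict measurableSet_Iio, setIntegral_congr_set
    ((Iio_ae_eq_Iic' h0).inter (ae_eq_refl (Ioc y x))), Iic_inter_Ioc_of_le ht.2,
    h.sub_eq_setIntegral (Ioc_subset_Icc_self ht) (left_mem_Icc.2 (ht.1.le.trans ht.2)) ht.1.le]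

end IsPrimitiveOn

section ProductRule

variable {ρ ν : Measure ℝ} {φ ψ F G : ℝ → ℝ} {x y : ℝ}

theorem IsPrimitiveOn.integrableOn_mul_sub (hG : IsPrimitiveOn ν ψ G (Icc y x))
    (hν : ν (Ioc y x) ≠ ⊤) (hφ : IntegrableOn φ (Ioc y x) ρ) (hψ : IntegrableOn ψ (Ioc y x) ν) :
    IntegrableOn (fun t => φ t * (G t - G y)) (Ioc y x) ρ := by
  have := isFiniteMeasure_restrict.2 hν
  refine (integrable_mul_integral_Iic hφ hψ).congr ?_
  filter_upwards [ae_restrict_mem measurableSet_Ioc] with t ht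
  rw [hG.sub_eq_integral_Iic_restrict ht]

theorem IsPrimitiveOn.integrableOn_mul (hG : IsPrimitiveOn ν ψ G (Icc y x))
    (hν : ν (Ioc y x) ≠ ⊤) (hφ : IntegrableOn φ (Ioc y x) ρ) (hψ : IntegrableOn ψ (Ioc y x) ν) :
    IntegrableOn (fun t => φ t * G t) (Ioc y x) ρ := by
  refine ((hG.integrableOn_mul_sub hν hφ hψ).add (hφ.mul_const (G y))).congr_fun
    (fun t _ => ?_) measurableSet_Ioc
  simp only [Pi.add_apply]
  ring

theorem IsPrimitiveOn.setIntegral_mul_sub_add_setIntegral_sub_mul (hyx : y ≤ x)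
    (hF : IsPrimitiveOn ρ φ F (Icc y x)) (hG : IsPrimitiveOn ν ψ G (Icc y x))
    (hρ0 : ∀ t ∈ Ioc y x, ρ {t} = 0) (hρ : ρ (Ioc y x) ≠ ⊤) (hν : ν (Ioc y x) ≠ ⊤)
    (hφ : IntegrableOn φ (Ioc y x) ρ) (hψ : IntegrableOn ψ (Ioc y x) ν) :
    ∫ t in Ioc y x, φ t * (G t - G y) ∂ρ + ∫ t in Ioc y x, (F t - F y) * ψ t ∂ν
      = (F x - F y) * (G x - G y) := by
  have := isFiniteMeasure_restrict.2 hρ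
  have := isFiniteMeasure_restrict.2 hν
  have hx : x ∈ Icc y x := right_mem_Icc.2 hyx
  have hy : y ∈ Icc y x := left_mem_Icc.2 hyx
  rw [hF.sub_eq_setIntegral hx hy hyx, hG.sub_eq_setIntegral hx hy hyx,
    ← integral_mul_integral_Iic_add_integral_Iio_mul hφ hψ]
  congr 1
  · refine setIntegral_congr_fun measurableSet_Ioc fun t ht => ?_
    rw [hG.sub_eq_integral_Iic_restrict ht]
  · refine setIntegral_congr_fun measurableSet_Ioc fun t ht => ?_
    rw [hF.sub_eq_integral_Iio_restrict ht (hρ0 t ht)]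

/-- Without `ρ {t} = 0` the second integrand would involve the left limit `F (t⁻)`. -/
theorem IsPrimitiveOn.mul_sub_mul (hyx : y ≤ x)
    (hF : IsPrimitiveOn ρ φ F (Icc y x)) (hG : IsPrimitiveOn ν ψ G (Icc y x))
    (hρ0 : ∀ t ∈ Ioc y x, ρ {t} = 0) (hρ : ρ (Ioc y x) ≠ ⊤) (hν : ν (Ioc y x) ≠ ⊤)
    (hφ : IntegrableOn φ (Ioc y x) ρ) (hψ : IntegrableOn ψ (Ioc y x) ν) :
    F x * G x - F y * G y
      = ∫ t in Ioc y x, φ t * G t ∂ρ + ∫ t in Ioc y x, F t * ψ t ∂ν := by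
  have hx : x ∈ Icc y x := right_mem_Icc.2 hyx
  have hy : y ∈ Icc y x := left_mem_Icc.2 hyx
  have hφG : ∫ t in Ioc y x, φ t * G t ∂ρ
      = ∫ t in Ioc y x, φ t * (G t - G y) ∂ρ + (F x - F y) * G y := by
    rw [hF.sub_eq_setIntegral hx hy hyx, ← integral_mul_const,
      ← integral_add (hG.integrableOn_mul_sub hν hφ hψ) (hφ.mul_const _)]
    congr 1 with t; ring
  have hFψ : ∫ t in Ioc y x, F t * ψ t ∂ν
      = ∫ t in Ioc y x, (F t - F y) * ψ t ∂ν + F y * (G x - G y) := by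
    have hint := (hF.integrableOn_mul_sub hρ hψ hφ).congr_fun (fun t _ => mul_comm _ _)
      measurableSet_Ioc
    rw [hG.sub_eq_setIntegral hx hy hyx, ← integral_const_mul,
      ← integral_add hint (hψ.const_mul _)]
    congr 1 with t; ring
  rw [hφG, hFψ, add_add_add_comm,
    hF.setIntegral_mul_sub_add_setIntegral_sub_mul hyx hG hρ0 hρ hν hφ hψ]
  ring

end ProductRule

section Stieltjes

variable {μ : Measure ℝ} {S : Set ℝ} {f : ℝ → ℝ}

theorem measure_singleton_eq_zero_of_continuousOn (hS : IsOpen S)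
    (hμ : ∀ x ∈ S, ∀ y ∈ S, x ≤ y → μ (Ioc x y) = ENNReal.ofReal (f y - f x))
    (hf : ContinuousOn f S) : ∀ p ∈ S, μ {p} = 0 := by
  intro p hp
  have hlim : Tendsto (fun q => ENNReal.ofReal (f p - f q)) (𝓝[<] p) (𝓝 0) := by
    have := (hf.continuousAt (hS.mem_nhds hp)).tendsto.mono_left
      (nhdsWithin_le_nhds (s := Iio p))
    simpa using ENNReal.tendsto_ofReal ((tendsto_const_nhds (x := f p)).sub this)
  refine le_antisymm (ge_of_tendsto hlim ?_) bot_le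
  filter_upwards [self_mem_nhdsWithin, mem_nhdsWithin_of_mem_nhds (hS.mem_nhds hp)] with q hqp hq
  rw [← hμ q hq p hp hqp.le]
  exact measure_mono (singleton_subset_iff.2 ⟨hqp, le_rfl⟩)

theorem MonotoneOn.integrableOn_Ioc (hf : MonotoneOn f S) (hS : S.OrdConnected)
    (hμ : ∀ x ∈ S, ∀ y ∈ S, x ≤ y → μ (Ioc x y) ≠ ⊤) :
    ∀ x ∈ S, ∀ y ∈ S, IntegrableOn f (Ioc x y) μ := by
  intro x hx y hy
  rcases le_total x y with hxy | hyx
  · have := isFiniteMeasure_restrict.2 (hμ x hx y hy hxy)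
    have := (hf.mono (hS.out hx hy)).integrableOn_isCompact isCompact_Icc
      (μ := μ.restrict (Ioc x y))
    rwa [IntegrableOn, Measure.restrict_restrict measurableSet_Icc,
      inter_eq_right.2 Ioc_subset_Icc_self] at this
  · simp [Ioc_eq_empty (not_lt.2 hyx)]

theorem AntitoneOn.integrableOn_Ioc (hf : AntitoneOn f S) (hS : S.OrdConnected)
    (hμ : ∀ x ∈ S, ∀ y ∈ S, x ≤ y → μ (Ioc x y) ≠ ⊤) :
    ∀ x ∈ S, ∀ y ∈ S, IntegrableOn f (Ioc x y) μ := fun x hx y hy => by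
  simpa using (hf.neg.integrableOn_Ioc hS hμ x hx y hy).neg

theorem MonotoneOn.integrableOn_inter_Iic (hf : MonotoneOn f S) (hS : S.OrdConnected)
    (hμ : ∀ x ∈ S, ∀ y ∈ S, x ≤ y → μ (Ioc x y) ≠ ⊤) {c : ℝ} (hc : c ∈ S) (hc0 : μ {c} = 0)
    (hf_int : IntegrableOn f (S ∩ Iio c) μ) {x : ℝ} (hx : x ∈ S) :
    IntegrableOn f (S ∩ Iic x) μ := by
  have hsub : S ∩ Iic x ⊆ (S ∩ Iio c) ∪ ({c} ∪ Ioc c x) := by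
    rintro t ⟨htS, htx⟩
    rcases lt_trichotomy t c with htc | rfl | hct
    exacts [Or.inl ⟨htS, htc⟩, Or.inr (Or.inl rfl), Or.inr (Or.inr ⟨hct, htx⟩)]
  have hc_int : IntegrableOn f {c} μ := by
    rw [IntegrableOn, Measure.restrict_eq_zero.2 hc0]
    exact integrable_zero_measure
  exact (hf_int.union (hc_int.union (hf.integrableOn_Ioc hS hμ c hc x hx))).mono_set hsub

theorem AntitoneOn.integrableOn_inter_Ioi (hf : AntitoneOn f S) (hS : S.OrdConnected)
    (hμ : ∀ x ∈ S, ∀ y ∈ S, x ≤ y → μ (Ioc x y) ≠ ⊤) {c : ℝ} (hc : c ∈ S)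
    (hf_int : IntegrableOn f (S ∩ Ioi c) μ) {x : ℝ} (hx : x ∈ S) :
    IntegrableOn f (S ∩ Ioi x) μ := by
  have hsub : S ∩ Ioi x ⊆ (S ∩ Ioi c) ∪ Ioc x c := by
    rintro t ⟨htS, hxt⟩
    rcases lt_or_ge c t with hct | htc
    exacts [Or.inl ⟨htS, hct⟩, Or.inr ⟨hxt, htc⟩]
  exact (hf_int.union (hf.integrableOn_Ioc hS hμ x hx c hc)).mono_set hsub

theorem isPrimitiveOn_setIntegral_inter_Iic (hS : S.OrdConnected)
    (hf : ∀ x ∈ S, IntegrableOn f (S ∩ Iic x) μ) :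
    IsPrimitiveOn μ f (fun x => ∫ t in S ∩ Iic x, f t ∂μ) S := by
  refine IsPrimitiveOn.of_le fun x hx y hy hyx => ?_
  have hdiff : (S ∩ Iic x) \ (S ∩ Iic y) = Ioc y x := by
    ext t
    simp only [Set.mem_sdiff, mem_inter_iff, mem_Iic, mem_Ioc, not_and, not_le]
    exact ⟨fun ⟨⟨htS, htx⟩, hyt⟩ => ⟨hyt htS, htx⟩,
      fun ⟨hyt, htx⟩ => ⟨⟨hS.out hy hx ⟨hyt.le, htx⟩, htx⟩, fun _ => hyt⟩⟩
  rw [← hdiff, setIntegral_sdiff (hS.measurableSet.inter measurableSet_Iic) (hf x hx)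
    (inter_subset_inter_right _ (Iic_subset_Iic.2 hyx))]

theorem isPrimitiveOn_setIntegral_inter_Ioi (hS : S.OrdConnected)
    (hf : ∀ x ∈ S, IntegrableOn f (S ∩ Ioi x) μ) :
    IsPrimitiveOn μ (fun t => -f t) (fun x => ∫ t in S ∩ Ioi x, f t ∂μ) S := by
  refine IsPrimitiveOn.of_le fun x hx y hy hyx => ?_
  have hdiff : (S ∩ Ioi y) \ (S ∩ Ioi x) = Ioc y x := by
    ext t
    simp only [Set.mem_sdiff, mem_inter_iff, mem_Ioi, mem_Ioc, not_and, not_lt]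
    exact ⟨fun ⟨⟨htS, hyt⟩, htx⟩ => ⟨hyt, htx htS⟩,
      fun ⟨hyt, htx⟩ => ⟨⟨hS.out hy hx ⟨hyt.le, htx⟩, hyt⟩, fun _ => htx⟩⟩
  rw [integral_neg, ← hdiff, setIntegral_sdiff (hS.measurableSet.inter measurableSet_Ioi)
    (hf y hy) (inter_subset_inter_right _ (Ioi_subset_Ioi hyx))]
  ring

end Stieltjes

section ProductOfPrimitives

variable {S : Set ℝ} {μ ν : Measure ℝ} {φ ψ χ κ F G H K : ℝ → ℝ}

theorem IsPrimitiveOn.mul_add_mul_of_cancel (hS : S.OrdConnected) (hμ0 : ∀ t ∈ S, μ {t} = 0)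
    (hμ : ∀ x ∈ S, ∀ y ∈ S, x ≤ y → μ (Ioc x y) ≠ ⊤)
    (hν : ∀ x ∈ S, ∀ y ∈ S, x ≤ y → ν (Ioc x y) ≠ ⊤)
    (hF : IsPrimitiveOn μ φ F S) (hG : IsPrimitiveOn ν ψ G S)
    (hH : IsPrimitiveOn μ χ H S) (hK : IsPrimitiveOn ν κ K S)
    (hφ : ∀ x ∈ S, ∀ y ∈ S, IntegrableOn φ (Ioc x y) μ)
    (hψ : ∀ x ∈ S, ∀ y ∈ S, IntegrableOn ψ (Ioc x y) ν)
    (hχ : ∀ x ∈ S, ∀ y ∈ S, IntegrableOn χ (Ioc x y) μ)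
    (hκ : ∀ x ∈ S, ∀ y ∈ S, IntegrableOn κ (Ioc x y) ν)
    (hcancel : ∀ t ∈ S, F t * ψ t + H t * κ t = 0) :
    IsPrimitiveOn μ (fun t => φ t * G t + χ t * K t) (fun t => F t * G t + H t * K t) S := by
  refine IsPrimitiveOn.of_le fun x hx y hy hyx => ?_
  have hsub : Icc y x ⊆ S := hS.out hy hx
  have hsub' : Ioc y x ⊆ S := Ioc_subset_Icc_self.trans hsub
  have h0 : ∀ t ∈ Ioc y x, μ {t} = 0 := fun t ht => hμ0 t (hsub' ht)
  have hFG := (hF.mono hsub).mul_sub_mul hyx (hG.mono hsub) h0 (hμ y hy x hx hyx)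
    (hν y hy x hx hyx) (hφ y hy x hx) (hψ y hy x hx)
  have hHK := (hH.mono hsub).mul_sub_mul hyx (hK.mono hsub) h0 (hμ y hy x hx hyx)
    (hν y hy x hx hyx) (hχ y hy x hx) (hκ y hy x hx)
  have hν_part : ∫ t in Ioc y x, H t * κ t ∂ν = -∫ t in Ioc y x, F t * ψ t ∂ν := by
    rw [← integral_neg]
    exact setIntegral_congr_fun measurableSet_Ioc fun t ht =>
      eq_neg_of_add_eq_zero_right (hcancel t (hsub' ht))
  rw [integral_add
    ((hG.mono hsub).integrableOn_mul (hν y hy x hx hyx) (hφ y hy x hx) (hψ y hy x hx))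
    ((hK.mono hsub).integrableOn_mul (hν y hy x hx hyx) (hχ y hy x hx) (hκ y hy x hx))]
  linarith

theorem IsPrimitiveOn.mul_add_mul (hS : S.OrdConnected) (hμ0 : ∀ t ∈ S, μ {t} = 0)
    (hμ : ∀ x ∈ S, ∀ y ∈ S, x ≤ y → μ (Ioc x y) ≠ ⊤)
    (hF : IsPrimitiveOn μ φ F S) (hG : IsPrimitiveOn μ ψ G S)
    (hH : IsPrimitiveOn μ χ H S) (hK : IsPrimitiveOn μ κ K S)
    (hφ : ∀ x ∈ S, ∀ y ∈ S, IntegrableOn φ (Ioc x y) μ)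
    (hψ : ∀ x ∈ S, ∀ y ∈ S, IntegrableOn ψ (Ioc x y) μ)
    (hχ : ∀ x ∈ S, ∀ y ∈ S, IntegrableOn χ (Ioc x y) μ)
    (hκ : ∀ x ∈ S, ∀ y ∈ S, IntegrableOn κ (Ioc x y) μ) :
    IsPrimitiveOn μ (fun t => φ t * G t + F t * ψ t + (χ t * K t + H t * κ t))
      (fun t => F t * G t + H t * K t) S := by
  refine IsPrimitiveOn.of_le fun x hx y hy hyx => ?_
  have hsub : Icc y x ⊆ S := hS.out hy hx
  have h0 : ∀ t ∈ Ioc y x, μ {t} = 0 := fun t ht => hμ0 t (hsub (Ioc_subset_Icc_self ht))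
  have hfin := hμ y hy x hx hyx
  have hFG := (hF.mono hsub).mul_sub_mul hyx (hG.mono hsub) h0 hfin hfin
    (hφ y hy x hx) (hψ y hy x hx)
  have hHK := (hH.mono hsub).mul_sub_mul hyx (hK.mono hsub) h0 hfin hfin
    (hχ y hy x hx) (hκ y hy x hx)
  have hφG := (hG.mono hsub).integrableOn_mul hfin (hφ y hy x hx) (hψ y hy x hx)
  have hχK := (hK.mono hsub).integrableOn_mul hfin (hχ y hy x hx) (hκ y hy x hx)
  have hFψ : IntegrableOn (fun t => F t * ψ t) (Ioc y x) μ :=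
    ((hF.mono hsub).integrableOn_mul hfin (hψ y hy x hx) (hφ y hy x hx)).congr_fun
      (fun t _ => mul_comm _ _) measurableSet_Ioc
  have hHκ : IntegrableOn (fun t => H t * κ t) (Ioc y x) μ :=
    ((hH.mono hsub).integrableOn_mul hfin (hκ y hy x hx) (hχ y hy x hx)).congr_fun
      (fun t _ => mul_comm _ _) measurableSet_Ioc
  rw [integral_add (f := fun t => φ t * G t + F t * ψ t) (g := fun t => χ t * K t + H t * κ t)
      (hφG.add hFψ) (hχK.add hHκ), integral_add hφG hFψ, integral_add hχK hHκ]
  linarith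

end ProductOfPrimitives

theorem setIntegral_min_max_mul {μ : Measure ℝ} {S : Set ℝ} {u v g : ℝ → ℝ} {x : ℝ}
    (hS : MeasurableSet S) (hu : IntegrableOn (fun t => u t * g t) (S ∩ Iic x) μ)
    (hv : IntegrableOn (fun t => v t * g t) (S ∩ Ioi x) μ) :
    ∫ t in S, u (min x t) * v (max x t) * g t ∂μ
      = v x * ∫ t in S ∩ Iic x, u t * g t ∂μ + u x * ∫ t in S ∩ Ioi x, v t * g t ∂μ := by
  have hle : EqOn (fun t => u (min x t) * v (max x t) * g t) (fun t => v x * (u t * g t))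
      (S ∩ Iic x) := fun t ⟨_, (htx : t ≤ x)⟩ => by
    simp only [min_eq_right htx, max_eq_left htx]; ring
  have hgt : EqOn (fun t => u (min x t) * v (max x t) * g t) (fun t => u x * (v t * g t))
      (S ∩ Ioi x) := fun t ⟨_, (hxt : x < t)⟩ => by
    simp only [min_eq_left hxt.le, max_eq_right hxt.le]; ring
  have hSle := hS.inter (measurableSet_Iic (a := x))
  have hSgt := hS.inter (measurableSet_Ioi (a := x))
  conv_lhs => rw [← inter_univ S, ← Iic_union_Ioi (a := x), inter_union_distrib_left]
  rw [setIntegral_union ((Iic_disjoint_Ioi le_rfl).mono inter_subset_right inter_subset_right)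
      hSgt (IntegrableOn.congr_fun (hu.const_mul (v x)) hle.symm hSle)
      (IntegrableOn.congr_fun (hv.const_mul (u x)) hgt.symm hSgt),
    setIntegral_congr_fun hSle hle, setIntegral_congr_fun hSgt hgt, integral_const_mul,
    integral_const_mul]

theorem exists_isPrimitiveOn_resolvent {S : Set ℝ} (hS : S.OrdConnected) {μs μm : Measure ℝ}
    (hμs0 : ∀ t ∈ S, μs {t} = 0) (hμs : ∀ x ∈ S, ∀ y ∈ S, x ≤ y → μs (Ioc x y) ≠ ⊤)
    (hμm0 : ∀ t ∈ S, μm {t} = 0) (hμm : ∀ x ∈ S, ∀ y ∈ S, x ≤ y → μm (Ioc x y) ≠ ⊤)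
    {r : ℝ} (hr : 0 ≤ r) {u v us vs : ℝ → ℝ}
    (hu_nonneg : ∀ x ∈ S, 0 ≤ u x) (humono : MonotoneOn u S)
    (hv_nonneg : ∀ x ∈ S, 0 ≤ v x) (hvanti : AntitoneOn v S)
    (hu : IsPrimitiveOn μs us u S) (hv : IsPrimitiveOn μs vs v S)
    (hus : IsPrimitiveOn μm (fun z => r * u z) us S)
    (hvs : IsPrimitiveOn μm (fun z => r * v z) vs S)
    (hW : ∀ x ∈ S, v x * us x - u x * vs x = 1)
    {c : ℝ} (hc : c ∈ S) (hu_int : IntegrableOn u (S ∩ Iio c) μm)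
    (hv_int : IntegrableOn v (S ∩ Ioi c) μm)
    {g : ℝ → ℝ} (hg : Measurable g) {C : ℝ} (hgC : ∀ x, |g x| ≤ C) :
    ∃ fs : ℝ → ℝ,
      IsPrimitiveOn μs fs (fun x => ∫ t in S, u (min x t) * v (max x t) * g t ∂μm) S ∧
      IsPrimitiveOn μm
        (fun x => r * (∫ t in S, u (min x t) * v (max x t) * g t ∂μm) - g x) fs S := by
  have hug : ∀ x ∈ S, IntegrableOn (fun t => u t * g t) (S ∩ Iic x) μm := fun x hx =>
    (humono.integrableOn_inter_Iic hS hμm hc (hμm0 c hc) hu_int hx).mul_bdd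
      hg.aestronglyMeasurable (ae_of_all _ hgC)
  have hvg : ∀ x ∈ S, IntegrableOn (fun t => v t * g t) (S ∩ Ioi x) μm := fun x hx =>
    (hvanti.integrableOn_inter_Ioi hS hμm hc hv_int hx).mul_bdd
      hg.aestronglyMeasurable (ae_of_all _ hgC)
  have hp : ∀ x ∈ S, ∀ y ∈ S, IntegrableOn (fun t => u t * g t) (Ioc x y) μm :=
    fun x hx y hy => (hug y hy).mono_set fun t ht =>
      ⟨hS.out hx hy (Ioc_subset_Icc_self ht), ht.2⟩
  have hq : ∀ x ∈ S, ∀ y ∈ S, IntegrableOn (fun t => -(v t * g t)) (Ioc x y) μm :=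
    fun x hx y hy => (hvg x hx).neg.mono_set fun t ht =>
      ⟨hS.out hx hy (Ioc_subset_Icc_self ht), ht.1⟩
  have hus_int := (hus.monotoneOn hS fun t ht => mul_nonneg hr (hu_nonneg t ht)).integrableOn_Ioc
    hS hμs
  have hvs_int := (hvs.monotoneOn hS fun t ht => mul_nonneg hr (hv_nonneg t ht)).integrableOn_Ioc
    hS hμs
  have hru_int x hx y hy := (humono.integrableOn_Ioc hS hμm x hx y hy).const_mul r
  have hrv_int x hx y hy := (hvanti.integrableOn_Ioc hS hμm x hx y hy).const_mul r
  have hP := isPrimitiveOn_setIntegral_inter_Iic hS hug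
  have hQ := isPrimitiveOn_setIntegral_inter_Ioi hS hvg
  have hkernel : EqOn (fun x => ∫ t in S, u (min x t) * v (max x t) * g t ∂μm)
      (fun x => v x * (∫ t in S ∩ Iic x, u t * g t ∂μm) + u x * ∫ t in S ∩ Ioi x, v t * g t ∂μm)
      S := fun x hx => setIntegral_min_max_mul hS.measurableSet (hug x hx) (hvg x hx)
  refine ⟨_, (hv.mul_add_mul_of_cancel hS hμs0 hμs hμm hP hu hQ hvs_int hp hus_int hq
    fun t _ => by ring).congr hS (fun _ _ => rfl) hkernel.symm, ?_⟩
  refine (hvs.mul_add_mul hS hμm0 hμm hP hus hQ hrv_int hp hru_int hq).congr hS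
    (fun t ht => ?_) (fun _ _ => rfl)
  simp only [hkernel ht]
  linear_combination (-g t) * hW t ht

theorem resolvent_kernel_solves_ode_general
    (a b : EReal)
    (I : Set ℝ) (hI : I = {x : ℝ | a < (x : EReal) ∧ (x : EReal) < b})
    (s m : ℝ → ℝ)
    (hscont : ContinuousOn s I)
    (hmcont : ContinuousOn m I)
    (μs μm : Measure ℝ)
    (hμs : ∀ x ∈ I, ∀ y ∈ I, x ≤ y → μs (Set.Ioc x y) = ENNReal.ofReal (s y - s x))
    (hμm : ∀ x ∈ I, ∀ y ∈ I, x ≤ y → μm (Set.Ioc x y) = ENNReal.ofReal (m y - m x))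
    (r : ℝ) (hr : 0 < r)
    (u v us vs : ℝ → ℝ)
    (hupos : ∀ x ∈ I, 0 < u x) (humono : StrictMonoOn u I)
    (hvpos : ∀ x ∈ I, 0 < v x) (hvmono : StrictAntiOn v I)
    (hu : ∀ x ∈ I, ∀ y ∈ I, u x - u y = ∫ z in y..x, us z ∂μs)
    (hv : ∀ x ∈ I, ∀ y ∈ I, v x - v y = ∫ z in y..x, vs z ∂μs)
    (hus : ∀ x ∈ I, ∀ y ∈ I, us x - us y = r * ∫ z in y..x, u z ∂μm)
    (hvs : ∀ x ∈ I, ∀ y ∈ I, vs x - vs y = r * ∫ z in y..x, v z ∂μm)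
    -- normalization: Wronskian identically one
    (hW : ∀ x ∈ I, v x * us x - u x * vs x = 1)
    -- integrability of `u_r` near `a` and of `v_r` near `b`
    (c : ℝ) (hc : c ∈ I)
    (huintm : IntegrableOn u (I ∩ Set.Iio c) μm)
    (hvintm : IntegrableOn v (I ∩ Set.Ioi c) μm)
    -- `g` bounded Borel
    (g : ℝ → ℝ) (hgmeas : Measurable g) (C : ℝ) (hgbdd : ∀ x, |g x| ≤ C)
    -- `f = R_r^0 g`
    (f : ℝ → ℝ)
    (hf : ∀ x ∈ I, f x = ∫ y in I, u (min x y) * v (max x y) * g y ∂μm) :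
    ∃ fs : ℝ → ℝ,
      (∀ x ∈ I, ∀ y ∈ I, f x - f y = ∫ z in y..x, fs z ∂μs) ∧
      (∀ x ∈ I, ∀ y ∈ I, fs x - fs y = ∫ z in y..x, (r * f z - g z) ∂μm) := by
  have hIo : IsOpen I := hI ▸ isOpen_Ioo.preimage continuous_coe_real_ereal
  have hIc : I.OrdConnected := hI ▸ ordConnected_Ioo.preimage_mono EReal.coe_strictMono.monotone
  have hus' : IsPrimitiveOn μm (fun z => r * u z) us I := fun x hx y hy =>
    (hus x hx y hy).trans (intervalIntegral.integral_const_mul r u).symm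
  have hvs' : IsPrimitiveOn μm (fun z => r * v z) vs I := fun x hx y hy =>
    (hvs x hx y hy).trans (intervalIntegral.integral_const_mul r v).symm
  obtain ⟨fs, hfs, hfs'⟩ := exists_isPrimitiveOn_resolvent hIc
    (measure_singleton_eq_zero_of_continuousOn hIo hμs hscont)
    (fun x hx y hy hxy => (hμs x hx y hy hxy).trans_ne ENNReal.ofReal_ne_top)
    (measure_singleton_eq_zero_of_continuousOn hIo hμm hmcont)
    (fun x hx y hy hxy => (hμm x hx y hy hxy).trans_ne ENNReal.ofReal_ne_top)
    hr.le (fun x hx => (hupos x hx).le) humono.monotoneOn (fun x hx => (hvpos x hx).le)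
    hvmono.antitoneOn hu hv hus' hvs' hW hc huintm hvintm hgmeas hgbdd
  exact ⟨fs, hfs.congr hIc (fun _ _ => rfl) fun x hx => (hf x hx).symm,
    hfs'.congr hIc (fun x hx => by simp only [hf x hx]) fun _ _ => rfl⟩

/-- for the resolvent kernel operator
`R_r^0 g(x) = ∫_a^{b−} u_r(x∧y) v_r(x∨y) g(y) dm(y)` built from the normalized
positive increasing/decreasing solutions `u_r, v_r` of `Lφ = rφ` (Wronskian `≡ 1`),
and any bounded Borel `g`, the function `f = R_r^0 g` belongs to `D(L)` and
satisfies `L f = r f − g` on `(a,b)`. -/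
theorem resolvent_kernel_solves_ode
    (a b : EReal) (hab : a < b)
    (I : Set ℝ) (hI : I = {x : ℝ | a < (x : EReal) ∧ (x : EReal) < b})
    (s m : ℝ → ℝ)
    (hs : StrictMonoOn s I) (hscont : ContinuousOn s I)
    (hm : StrictMonoOn m I) (hmcont : ContinuousOn m I)
    (μs μm : Measure ℝ)
    (hμs : ∀ x ∈ I, ∀ y ∈ I, x ≤ y → μs (Set.Ioc x y) = ENNReal.ofReal (s y - s x))
    (hμm : ∀ x ∈ I, ∀ y ∈ I, x ≤ y → μm (Set.Ioc x y) = ENNReal.ofReal (m y - m x))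
    (r : ℝ) (hr : 0 < r)
    (u v us vs : ℝ → ℝ)
    (hupos : ∀ x ∈ I, 0 < u x) (humono : StrictMonoOn u I)
    (hvpos : ∀ x ∈ I, 0 < v x) (hvmono : StrictAntiOn v I)
    (hu : ∀ x ∈ I, ∀ y ∈ I, u x - u y = ∫ z in y..x, us z ∂μs)
    (hv : ∀ x ∈ I, ∀ y ∈ I, v x - v y = ∫ z in y..x, vs z ∂μs)
    (hus : ∀ x ∈ I, ∀ y ∈ I, us x - us y = r * ∫ z in y..x, u z ∂μm)
    (hvs : ∀ x ∈ I, ∀ y ∈ I, vs x - vs y = r * ∫ z in y..x, v z ∂μm)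
    -- normalization: Wronskian identically one
    (hW : ∀ x ∈ I, v x * us x - u x * vs x = 1)
    -- integrability of `u_r` near `a` and of `v_r` near `b`
    (c : ℝ) (hc : c ∈ I)
    (huintm : IntegrableOn u (I ∩ Set.Iio c) μm)
    (hvintm : IntegrableOn v (I ∩ Set.Ioi c) μm)
    -- `g` bounded Borel
    (g : ℝ → ℝ) (hgmeas : Measurable g) (C : ℝ) (hgbdd : ∀ x, |g x| ≤ C)
    -- `f = R_r^0 g`
    (f : ℝ → ℝ)
    (hf : ∀ x ∈ I, f x = ∫ y in I, u (min x y) * v (max x y) * g y ∂μm) :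
    ∃ fs : ℝ → ℝ,
      (∀ x ∈ I, ∀ y ∈ I, f x - f y = ∫ z in y..x, fs z ∂μs) ∧
      (∀ x ∈ I, ∀ y ∈ I, fs x - fs y = ∫ z in y..x, (r * f z - g z) ∂μm) :=
  resolvent_kernel_solves_ode_general a b I hI s m hscont hmcont μs μm hμs hμm r hr u v us vs hupos
    humono hvpos hvmono hu hv hus hvs hW c hc huintm hvintm g hgmeas C hgbdd f hf
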